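/- For integers n ≥ 0 and s with 2s ≥ n+2, the number of lattice paths from (0,0) to (n+2-2s, n+2) with n+2 steps of type (x,y)→(x±1,y+1), first and last step going right, exactly s left steps, and which cross the line x=0, equals binomial(n, s). -/

import Mathlib

open Finset
open scoped Classical
noncomputable section

/-- Position (x-coordinate) after `t` steps of the path `p`, where `true` encodes a
right step `(x,y) ↦ (x+1,y+1)` and `false` a left step `(x,y) ↦ (x-1,y+1)`. -/
def pathPos {m : ℕ} (p : Fin m → Bool) (t : ℕ) : ℤ :=
  ∑ j : Fin m, if (j : ℕ) < t then (if p j then (1 : ℤ) else -1) else 0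

/-- Generally admissible paths of size `(n,s)`: `n+2` diagonal steps starting at `(0,0)`,
the 0-th and the last step going right, with exactly `s` left steps
(hence ending at `(n+2-2s, n+2)`). -/
def admissible (n s : ℕ) : Finset (Fin (n + 2) → Bool) :=
  Finset.univ.filter (fun p =>
    (∀ j : Fin (n + 2), (j : ℕ) = 0 → p j = true) ∧
    (∀ j : Fin (n + 2), (j : ℕ) = n + 1 → p j = true) ∧
    (Finset.univ.filter (fun j => p j = false)).card = s)

/-- The path crosses the line `x = 0`, i.e. reaches x-coordinate `-1` at some time. -/
def crossesLeft {m : ℕ} (p : Fin m → Bool) : Prop :=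
  ∃ t ∈ Finset.range (m + 1), pathPos p t = -1

/-- A path of size `(n,s)` crosses the line `x = n+2-2s`,
i.e. reaches x-coordinate `n+3-2s` at some time. -/
def crossesRight (n s : ℕ) (p : Fin (n + 2) → Bool) : Prop :=
  ∃ t ∈ Finset.range (n + 3), pathPos p t = (n : ℤ) + 3 - 2 * s

/-- `L n s`: the number of generally admissible paths of size `(n,s)`
crossing the line `x = 0`. -/
def L (n s : ℕ) : ℕ := ((admissible n s).filter (fun p => crossesLeft p)).card

/-- Constrained lattice paths: `n+2` diagonal steps from `(0,0)` to `(n+2-2s, n+2)`,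
staying inside the strip `0 ≤ x ≤ n+2-2s`.  (`n` is allowed to be a negative integer,
with the convention that there are `max (n+2) 0` steps.) -/
def aPaths (n : ℤ) (s : ℕ) : Finset (Fin (n + 2).toNat → Bool) :=
  Finset.univ.filter (fun p =>
    pathPos p (n + 2).toNat = n + 2 - 2 * s ∧
    ∀ t ∈ Finset.range ((n + 2).toNat + 1),
      0 ≤ pathPos p t ∧ pathPos p t ≤ n + 2 - 2 * s)

/-- `a n s`: the number of lattice paths from `(0,0)` to `(n+2-2s, n+2)` with steps
`(x,y) ↦ (x±1, y+1)` staying inside the strip `0 ≤ x ≤ n+2-2s`. -/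
def a (n : ℤ) (s : ℕ) : ℕ := (aPaths n s).card

/-- Binomial coefficient `C(n,k)` with integer lower index, zero when `k < 0`. -/
def binom (n : ℕ) (k : ℤ) : ℕ := if k < 0 then 0 else n.choose k.toNat

/-- `b W H`: the number of lattice paths from `(0,0)` to `(W,H)` with steps
`(x,y) ↦ (x±1,y+1)` staying in the strip `0 ≤ x ≤ W`, whose first and last steps go
right, and whose intermediate steps come in consecutive same-direction pairs
`(1,2), (3,4), …, (H-3,H-2)`. -/
def bPaths (W H : ℕ) : Finset (Fin H → Bool) :=
  Finset.univ.filter (fun p =>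
    (∀ j : Fin H, (j : ℕ) = 0 → p j = true) ∧
    (∀ j : Fin H, (j : ℕ) = H - 1 → p j = true) ∧
    (∀ j1 j2 : Fin H, (j1 : ℕ) % 2 = 1 → (j2 : ℕ) = (j1 : ℕ) + 1 →
      (j1 : ℕ) + 1 ≤ H - 2 → p j1 = p j2) ∧
    pathPos p H = (W : ℤ) ∧
    ∀ t ∈ Finset.range (H + 1), 0 ≤ pathPos p t ∧ pathPos p t ≤ (W : ℤ))

def b (W H : ℕ) : ℕ := (bPaths W H).card

section

variable {m : ℕ} (p : Fin m → Bool)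

lemma pathPos_zero : pathPos p 0 = 0 := by
  simp [pathPos]

lemma pathPos_succ {t : ℕ} (ht : t < m) :
    pathPos p (t + 1) = pathPos p t + if p ⟨t, ht⟩ then 1 else -1 := by
  simp only [pathPos]
  rw [← Fintype.sum_ite_eq' (⟨t, ht⟩ : Fin m) (fun j => if p j then (1 : ℤ) else -1),
    ← sum_add_distrib]
  refine sum_congr rfl fun j _ => ?_
  rcases lt_trichotomy (j : ℕ) t with hj | hj | hj
  · simp [hj, Nat.lt_succ_of_lt hj, Fin.ext_iff, hj.ne]
  · simp [hj, Fin.ext_iff]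
  · simp [Fin.ext_iff, hj.ne', hj.not_gt, (Nat.succ_le_of_lt hj).not_gt]

lemma pathPos_length :
    pathPos p m = m - 2 * (univ.filter fun j => p j = false).card := by
  simp only [pathPos, Fin.is_lt, if_true, card_filter, Nat.cast_sum, mul_sum]
  rw [eq_sub_iff_add_eq, ← sum_add_distrib]
  trans ∑ _j : Fin m, (1 : ℤ)
  · refine sum_congr rfl fun j _ => ?_
    cases p j <;> simp
  · simp

lemma exists_pathPos_eq_of_pathPos_le {c : ℤ} (hc : c ≤ 0) :
    ∀ t ≤ m, pathPos p t ≤ c → ∃ t' ≤ t, pathPos p t' = c := by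
  intro t
  induction t with
  | zero => intro _ h; exact ⟨0, le_rfl, le_antisymm h (pathPos_zero p ▸ hc)⟩
  | succ t ih =>
    intro ht h
    by_cases heq : pathPos p (t + 1) = c
    · exact ⟨t + 1, le_rfl, heq⟩
    · have hstep := pathPos_succ p (Nat.lt_of_succ_le ht)
      obtain ⟨t', ht', h'⟩ := ih (Nat.le_of_succ_le ht) (by split at hstep <;> omega)
      exact ⟨t', Nat.le_succ_of_le ht', h'⟩

end

lemma card_boolFun_true_off_card_false_eq_choose {α : Type*} [Fintype α] (I : Finset α)
    (k : ℕ) :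
    (univ.filter fun f : α → Bool =>
      (∀ j ∉ I, f j = true) ∧ (univ.filter fun j => f j = false).card = k).card =
      I.card.choose k := by
  rw [← card_powersetCard]
  refine card_bij' (fun f _ => univ.filter fun j => f j = false) (fun S _ j => decide (j ∉ S))
    ?_ ?_ ?_ ?_
  · intro f hf
    simp only [mem_filter, mem_univ, true_and] at hf
    refine mem_powersetCard.2 ⟨fun j hj => ?_, hf.2⟩
    by_contra hjI
    simp [hf.1 j hjI] at hj
  · intro S hS
    obtain ⟨hSI, hcard⟩ := mem_powersetCard.1 hS
    simp only [mem_filter, mem_univ, true_and, decide_eq_true_eq, decide_eq_false_iff_not,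
      not_not, filter_mem_eq_inter, univ_inter, hcard, and_true]
    exact fun j hjI hjS => hjI (hSI hjS)
  · intro f _
    funext j
    cases hj : f j <;> simp [hj]
  · intro S _
    ext j
    simp

lemma card_admissible (n s : ℕ) : (admissible n s).card = n.choose s := by
  set I : Finset (Fin (n + 2)) := {0, Fin.last (n + 1)}ᶜ
  have hI : I.card = n := by
    rw [card_compl, card_pair (by simp [Fin.ext_iff]), Fintype.card_fin]; rfl
  have hadm : admissible n s = univ.filter fun f : Fin (n + 2) → Bool =>
      (∀ j ∉ I, f j = true) ∧ (univ.filter fun j => f j = false).card = s := by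
    ext f
    simp only [admissible, mem_filter, mem_univ, true_and, I, mem_compl, mem_insert,
      mem_singleton, not_not, Fin.ext_iff, Fin.val_zero, Fin.val_last, ← and_assoc]
    refine and_congr_left' ⟨fun h j hj => hj.elim (h.1 j) (h.2 j), fun h => ⟨?_, ?_⟩⟩ <;>
      intro j hj <;> exact h j (by simp [hj])
  rw [hadm]
  convert card_boolFun_true_off_card_false_eq_choose I s
  exact hI.symm

/-- Since `2s ≥ n + 2`, the endpoint `n + 2 - 2s` is `≤ 0`; the last step goes right,
so the path is at `≤ -1` one step earlier. -/
lemma crossesLeft_of_mem_admissible {n s : ℕ} (h : n + 2 ≤ 2 * s) {p : Fin (n + 2) → Bool}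
    (hp : p ∈ admissible n s) : crossesLeft p := by
  simp only [admissible, mem_filter, mem_univ, true_and] at hp
  obtain ⟨-, hlast, hcard⟩ := hp
  have hend := pathPos_length p
  rw [pathPos_succ p (Nat.lt_succ_self (n + 1)), hlast _ rfl, if_pos rfl, hcard] at hend
  have hle : pathPos p (n + 1) ≤ -1 := by omega
  obtain ⟨t, ht, hpos⟩ := exists_pathPos_eq_of_pathPos_le p (by norm_num) (n + 1) (by omega) hle
  exact ⟨t, mem_range.2 (by omega), hpos⟩

/-- for `2s ≥ n+2`, the number of generally admissible paths of size
`(n,s)` crossing the line `x = 0` equals `C(n, s)`. -/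
theorem stmt1 (n s : ℕ) (h : n + 2 ≤ 2 * s) :
    L n s = n.choose s := by
  rw [L, filter_true_of_mem fun p hp => crossesLeft_of_mem_admissible h hp, card_admissible]
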